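/- Let I ⊆ ℝ be an open interval, let f, h : I → ℝ be smooth with f nowhere zero, let A, B : ℝ → ℝ be smooth, let δ₁,…,δ₉ be real constants with δ₁δ₃δ₅δ₇δ₉ ≠ 0, and let H : I → ℝ be smooth with H′ = h. Define X : I → ℝ by X′(x) = δ₅e^{δ₈H(x)} and X(x) = δ₅∫e^{δ₈H}dx + δ₆ (so X is a diffeomorphism of I onto J = X(I)). Suppose u : ℝ × I → ℝ is a smooth solution of f(x)u_t = (A(u)u_x)_x + h(x)B(u)u_x. Define ũ on ℝ × J by ũ(δ₁t+δ₂, X(x)) = δ₃u(t,x)+δ₄, and define f̃(X(x)) = δ₁δ₅⁻¹δ₉ f(x)e^{−2δ₈H(x)}, h̃(X(x)) = δ₉δ₇⁻¹h(x)e^{−δ₈H(x)}, Ã(δ₃v+δ₄) = δ₅δ₉A(v), B̃(δ₃v+δ₄) = δ₇(B(v)+δ₈A(v)). Then ũ is a smooth solution of f̃(x̃)ũ_t̃ = (Ã(ũ)ũ_x̃)_x̃ + h̃(x̃)B̃(ũ)ũ_x̃ on ℝ × J; i.e. these (in general nonlocal in the arbitrary elements) transformations preserve the subclass of equations with g = 1.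 -/

import Mathlib

open Set Real
open scoped ContDiff

/-!
`X` has nonvanishing derivative `X' = δ₅ e^{δ₈ H}`, so by the inverse function theorem it has a
smooth local inverse near every point of `I`. This gives the smoothness of `ũ` and the chain rule
`∂_x̃ = X'(x)⁻¹ ∂_x`. The flux then transforms as `Ã(ũ) ũ_x̃ = δ₃ δ₉ e^{-δ₈ H} A(u) u_x`;
differentiating once more, the term `-δ₈ h e^{-δ₈ H} A(u) u_x` is cancelled by the `δ₈ A` part
of `B̃`, and what is left is `δ₃ δ₉ δ₅⁻¹ e^{-2 δ₈ H}` times the original equation.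
-/

open Filter Topology

theorem Filter.EventuallyEq.comp_of_rightInverse {α β γ : Type*} [TopologicalSpace α]
    [TopologicalSpace β] {X : α → β} {g : β → α} {F : β → γ} {G : α → γ} {x₀ : α} {y₀ : β}
    (hg : Tendsto g (𝓝 y₀) (𝓝 x₀)) (hr : ∀ᶠ y in 𝓝 y₀, X (g y) = y)
    (hFG : F ∘ X =ᶠ[𝓝 x₀] G) : F =ᶠ[𝓝 y₀] G ∘ g := by
  filter_upwards [hr, hg.eventually hFG] with y hXg hFXg
  calc F y = F (X (g y)) := by rw [hXg]
    _ = G (g y) := hFXg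

theorem ContDiffAt.exists_localInverse {X : ℝ → ℝ} {x₀ d : ℝ} {n : WithTop ℕ∞}
    (hX : ContDiffAt ℝ n X x₀) (hn : n ≠ 0) (hXd : HasDerivAt X d x₀) (hd : d ≠ 0) :
    ∃ g : ℝ → ℝ, ContDiffAt ℝ n g (X x₀) ∧ g (X x₀) = x₀ ∧ ∀ᶠ y in 𝓝 (X x₀), X (g y) = y :=
  have hXd' := hXd.hasFDerivAt_equiv hd
  ⟨hX.localInverse hXd' hn, hX.to_localInverse hXd' hn, hX.localInverse_apply_image hXd' hn,
    (hX.hasStrictFDerivAt' hXd' hn).eventually_right_inverse⟩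

theorem HasStrictDerivAt.hasDerivAt_of_comp_eq {X F G : ℝ → ℝ} {x₀ d G' : ℝ}
    (hX : HasStrictDerivAt X d x₀) (hd : d ≠ 0) (hFG : F ∘ X =ᶠ[𝓝 x₀] G)
    (hG : HasDerivAt G G' x₀) : HasDerivAt F (G' / d) (X x₀) := by
  have hX' := hX.hasStrictFDerivAt_equiv hd
  have hGg : HasDerivAt (G ∘ hX.localInverse X d x₀ hd) (G' * d⁻¹) (X x₀) := by
    refine HasDerivAt.comp _ ?_ (hX.to_localInverse hd).hasDerivAt
    rwa [show hX.localInverse X d x₀ hd (X x₀) = x₀ from hX'.localInverse_apply_image]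
  exact hGg.congr_of_eventuallyEq
    (hFG.comp_of_rightInverse hX'.localInverse_tendsto hX'.eventually_right_inverse)

theorem HasDerivAt.of_eq_affine_comp {φ ψ : ℝ → ℝ} {ψ' t δ₁ δ₂ δ₃ δ₄ : ℝ} (hδ₁ : δ₁ ≠ 0)
    (hφψ : ∀ s, φ (δ₁ * s + δ₂) = δ₃ * ψ s + δ₄) (hψ : HasDerivAt ψ ψ' t) :
    HasDerivAt φ (δ₃ * ψ' / δ₁) (δ₁ * t + δ₂) := by
  have hτ : HasStrictDerivAt (fun s => δ₁ * s + δ₂) δ₁ t := by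
    simpa using ((hasStrictDerivAt_id t).const_mul δ₁).add_const δ₂
  exact hτ.hasDerivAt_of_comp_eq (F := φ) hδ₁ (.of_forall hφψ) ((hψ.const_mul δ₃).add_const δ₄)

theorem ContDiffAt.of_comp_prodMap_eq {X : ℝ → ℝ} {F G : ℝ × ℝ → ℝ} {s₀ x₀ d : ℝ}
    {n : WithTop ℕ∞} (hX : ContDiffAt ℝ n X x₀) (hn : n ≠ 0) (hXd : HasDerivAt X d x₀)
    (hd : d ≠ 0) (hFG : F ∘ Prod.map id X =ᶠ[𝓝 (s₀, x₀)] G) (hG : ContDiffAt ℝ n G (s₀, x₀)) :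
    ContDiffAt ℝ n F (s₀, X x₀) := by
  obtain ⟨g, hg, hgX, hXg⟩ := hX.exists_localInverse hn hXd hd
  have hg₂ : ContDiffAt ℝ n (Prod.map id g) (s₀, X x₀) :=
    contDiffAt_fst.prodMk (hg.comp (s₀, X x₀) contDiffAt_snd :)
  have hG₂ : ContDiffAt ℝ n (G ∘ Prod.map id g) (s₀, X x₀) := by
    refine ContDiffAt.comp _ ?_ hg₂
    simpa [hgX] using hG
  have hXg₂ : ∀ᶠ p in 𝓝 (s₀, X x₀), Prod.map id X (Prod.map id g p) = p := by
    rw [nhds_prod_eq]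
    exact (hXg.prod_inr _).mono fun p hp => Prod.ext rfl hp
  have hg₂_tendsto : Tendsto (Prod.map id g) (𝓝 (s₀, X x₀)) (𝓝 (s₀, x₀)) := by
    simpa [hgX] using hg₂.continuousAt.tendsto
  exact hG₂.congr_of_eventuallyEq (hFG.comp_of_rightInverse hg₂_tendsto hXg₂)

section Slices

variable {I : Set ℝ} {u : ℝ → ℝ → ℝ} {n : WithTop ℕ∞}

theorem ContDiffOn.contDiffOn_uncurry_slice
    (hu : ContDiffOn ℝ n (fun p : ℝ × ℝ => u p.1 p.2) (univ ×ˢ I)) (t : ℝ) :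
    ContDiffOn ℝ n (u t) I :=
  hu.comp (contDiff_const.prodMk contDiff_id).contDiffOn fun _ hz => ⟨trivial, hz⟩

theorem ContDiffOn.differentiableAt_uncurry_slice_left (hI : IsOpen I) (hn : n ≠ 0)
    (hu : ContDiffOn ℝ n (fun p : ℝ × ℝ => u p.1 p.2) (univ ×ˢ I)) (t : ℝ) {x : ℝ}
    (hx : x ∈ I) : DifferentiableAt ℝ (fun s => u s x) t := by
  have hpath : DifferentiableAt ℝ (fun s : ℝ => (s, x)) t :=
    differentiableAt_id.prodMk (differentiableAt_const x)
  exact ((hu.contDiffAt (prod_mem_nhds univ_mem (hI.mem_nhds hx))).differentiableAt hn).comp t hpath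

end Slices

theorem contDiffOn_uncurry_of_eq_affine_transform {I : Set ℝ} (hI : IsOpen I) {n : WithTop ℕ∞}
    (hn : n ≠ 0) {X d : ℝ → ℝ} (hX : ContDiffOn ℝ n X I) (hXd : ∀ x ∈ I, HasDerivAt X (d x) x)
    (hd : ∀ x ∈ I, d x ≠ 0) {u ut : ℝ → ℝ → ℝ}
    (hu : ContDiffOn ℝ n (fun p : ℝ × ℝ => u p.1 p.2) (univ ×ˢ I)) {δ₁ δ₂ δ₃ δ₄ : ℝ}
    (hδ₁ : δ₁ ≠ 0) (hut : ∀ t : ℝ, ∀ x ∈ I, ut (δ₁ * t + δ₂) (X x) = δ₃ * u t x + δ₄) :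
    ContDiffOn ℝ n (fun p : ℝ × ℝ => ut p.1 p.2) (univ ×ˢ (X '' I)) := by
  rintro ⟨s, _⟩ ⟨-, x, hx, rfl⟩
  have hIx : univ ×ˢ I ∈ 𝓝 (s, x) := prod_mem_nhds univ_mem (hI.mem_nhds hx)
  have hG : ContDiffAt ℝ n (fun p : ℝ × ℝ => δ₃ * u ((p.1 - δ₂) / δ₁) p.2 + δ₄) (s, x) := by
    refine (contDiffAt_const.mul ?_).add contDiffAt_const
    exact (hu.contDiffAt (prod_mem_nhds univ_mem (hI.mem_nhds hx))).comp (s, x)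
      (((contDiffAt_fst.sub contDiffAt_const).div_const δ₁).prodMk contDiffAt_snd)
  refine ContDiffAt.contDiffWithinAt <|
    (hX.contDiffAt (hI.mem_nhds hx)).of_comp_prodMap_eq hn (hXd x hx) (hd x hx) ?_ hG
  filter_upwards [hIx] with p hp
  have := hut ((p.1 - δ₂) / δ₁) p.2 hp.2
  rwa [mul_div_cancel₀ _ hδ₁, sub_add_cancel] at this

def DiffusionConvectionEqAt (f h A B : ℝ → ℝ) (u : ℝ → ℝ → ℝ) (t x : ℝ) : Prop :=
  f x * deriv (fun s => u s x) t
    = deriv (fun y => A (u t y) * deriv (fun z => u t z) y) x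
      + h x * B (u t x) * deriv (fun y => u t y) x

theorem DiffusionConvectionEqAt.transform {I : Set ℝ} (hI : IsOpen I)
    {f h A B H X : ℝ → ℝ} {ft ht At Bt : ℝ → ℝ} {u ut : ℝ → ℝ → ℝ}
    {δ₁ δ₂ δ₃ δ₄ δ₅ δ₇ δ₈ δ₉ : ℝ} (hδ₁ : δ₁ ≠ 0) (hδ₅ : δ₅ ≠ 0) (hδ₇ : δ₇ ≠ 0)
    (hA : Differentiable ℝ A)
    (hu : ContDiffOn ℝ 2 (fun p : ℝ × ℝ => u p.1 p.2) (univ ×ˢ I))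
    (hH : ∀ x ∈ I, HasDerivAt H (h x) x)
    (hX : ∀ x ∈ I, HasStrictDerivAt X (δ₅ * exp (δ₈ * H x)) x)
    (hut : ∀ t : ℝ, ∀ x ∈ I, ut (δ₁ * t + δ₂) (X x) = δ₃ * u t x + δ₄)
    (hft : ∀ x ∈ I, ft (X x) = δ₁ * δ₅⁻¹ * δ₉ * f x * exp (-(2 * δ₈ * H x)))
    (hht : ∀ x ∈ I, ht (X x) = δ₉ * δ₇⁻¹ * h x * exp (-(δ₈ * H x)))
    (hAt : ∀ v : ℝ, At (δ₃ * v + δ₄) = δ₅ * δ₉ * A v)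
    (hBt : ∀ v : ℝ, Bt (δ₃ * v + δ₄) = δ₇ * (B v + δ₈ * A v))
    {t x : ℝ} (hx : x ∈ I) (hpde : DiffusionConvectionEqAt f h A B u t x) :
    DiffusionConvectionEqAt ft ht At Bt ut (δ₁ * t + δ₂) (X x) := by
  set t' := δ₁ * t + δ₂
  have hc : ∀ x, δ₅ * exp (δ₈ * H x) ≠ 0 := fun x => mul_ne_zero hδ₅ (exp_ne_zero _)
  have hx_nhds : I ∈ 𝓝 x := hI.mem_nhds hx
  have hslice := hu.contDiffOn_uncurry_slice t
  have hu_x : ∀ x ∈ I, HasDerivAt (u t) (deriv (u t) x) x := fun x hx =>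
    ((hslice.contDiffAt (hI.mem_nhds hx)).differentiableAt two_ne_zero).hasDerivAt
  have hut_t : HasDerivAt (fun s => ut s (X x)) (δ₃ * deriv (fun s => u s x) t / δ₁) t' :=
    .of_eq_affine_comp hδ₁ (fun s => hut s x hx)
      (hu.differentiableAt_uncurry_slice_left hI two_ne_zero t hx).hasDerivAt
  have hut_x : ∀ x ∈ I,
      HasDerivAt (ut t') (δ₃ * deriv (u t) x / (δ₅ * exp (δ₈ * H x))) (X x) := fun x hx =>
    (hX x hx).hasDerivAt_of_comp_eq (hc x) (eventually_of_mem (hI.mem_nhds hx) (hut t))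
      ((hu_x x hx).const_mul δ₃ |>.add_const δ₄)
  have hflux : ∀ y ∈ I, At (ut t' (X y)) * deriv (ut t') (X y)
      = δ₃ * δ₉ * (exp (-(δ₈ * H y)) * (A (u t y) * deriv (u t) y)) := by
    intro y hy
    rw [hut t y hy, hAt, (hut_x y hy).deriv, exp_neg]
    field_simp
  set P := fun y => A (u t y) * deriv (u t) y
  have hP : HasDerivAt P (deriv P x) x := by
    refine (((hA _).comp x (hu_x x hx).differentiableAt).mul ?_).hasDerivAt
    exact ((hslice.deriv_of_isOpen hI le_rfl).differentiableOn one_ne_zero).differentiableAt hx_nhds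
  have hflux_x : HasDerivAt (fun y => At (ut t' y) * deriv (ut t') y)
      (δ₃ * δ₉ * (exp (-(δ₈ * H x)) * (-(δ₈ * h x)) * P x + exp (-(δ₈ * H x)) * deriv P x)
        / (δ₅ * exp (δ₈ * H x))) (X x) :=
    (hX x hx).hasDerivAt_of_comp_eq (hc x) (eventually_of_mem hx_nhds hflux)
      ((((hH x hx).const_mul δ₈).neg.exp.mul hP).const_mul _)
  have hE : exp (-(2 * δ₈ * H x)) = (exp (δ₈ * H x))⁻¹ ^ 2 := by
    rw [← exp_neg, ← exp_nat_mul]; ring_nf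
  unfold DiffusionConvectionEqAt at hpde ⊢
  rw [hft x hx, hht x hx, hut_t.deriv, hflux_x.deriv, (hut_x x hx).deriv, hut t x hx, hBt, hE,
    exp_neg]
  field_simp
  linear_combination δ₃ * δ₉ * hpde

theorem extended_equivalence_group_preserving_g_one_general
    (I : Set ℝ) (hIopen : IsOpen I)
    (f h : ℝ → ℝ)
    (A B : ℝ → ℝ) (hA : ContDiff ℝ ∞ A)
    (δ₁ δ₂ δ₃ δ₄ δ₅ δ₇ δ₈ δ₉ : ℝ)
    (hδ : δ₁ * δ₃ * δ₅ * δ₇ * δ₉ ≠ 0)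
    (H : ℝ → ℝ) (hH' : ∀ x ∈ I, HasDerivAt H (h x) x)
    (X : ℝ → ℝ) (hX : ContDiffOn ℝ ∞ X I)
    (hX' : ∀ x ∈ I, HasDerivAt X (δ₅ * Real.exp (δ₈ * H x)) x)
    (u : ℝ → ℝ → ℝ)
    (hu : ContDiffOn ℝ ∞ (fun p : ℝ × ℝ => u p.1 p.2) (univ ×ˢ I))
    (hpde : ∀ t : ℝ, ∀ x ∈ I,
      f x * deriv (fun s => u s x) t
        = deriv (fun y => A (u t y) * deriv (fun z => u t z) y) x
          + h x * B (u t x) * deriv (fun y => u t y) x)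
    (ut : ℝ → ℝ → ℝ) (ft ht At Bt : ℝ → ℝ)
    (hutdef : ∀ t : ℝ, ∀ x ∈ I, ut (δ₁ * t + δ₂) (X x) = δ₃ * u t x + δ₄)
    (hftdef : ∀ x ∈ I, ft (X x) = δ₁ * δ₅⁻¹ * δ₉ * f x * Real.exp (-(2 * δ₈ * H x)))
    (hhtdef : ∀ x ∈ I, ht (X x) = δ₉ * δ₇⁻¹ * h x * Real.exp (-(δ₈ * H x)))
    (hAtdef : ∀ v : ℝ, At (δ₃ * v + δ₄) = δ₅ * δ₉ * A v)
    (hBtdef : ∀ v : ℝ, Bt (δ₃ * v + δ₄) = δ₇ * (B v + δ₈ * A v)) :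
    ContDiffOn ℝ ∞ (fun p : ℝ × ℝ => ut p.1 p.2) (univ ×ˢ (X '' I))
      ∧ ∀ t : ℝ, ∀ x ∈ I,
          ft (X x) * deriv (fun s => ut s (X x)) (δ₁ * t + δ₂)
            = deriv (fun y => At (ut (δ₁ * t + δ₂) y)
                * deriv (fun z => ut (δ₁ * t + δ₂) z) y) (X x)
              + ht (X x) * Bt (ut (δ₁ * t + δ₂) (X x))
                * deriv (fun y => ut (δ₁ * t + δ₂) y) (X x) := by
  simp only [mul_ne_zero_iff] at hδ
  obtain ⟨⟨⟨⟨hδ₁, -⟩, hδ₅⟩, hδ₇⟩, -⟩ := hδ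
  have hX'_ne : ∀ x ∈ I, δ₅ * exp (δ₈ * H x) ≠ 0 := fun x _ => mul_ne_zero hδ₅ (exp_ne_zero _)
  have hX_strict : ∀ x ∈ I, HasStrictDerivAt X (δ₅ * exp (δ₈ * H x)) x := fun x hx => by
    simpa [(hX' x hx).deriv] using
      (hX.contDiffAt (hIopen.mem_nhds hx)).hasStrictDerivAt (by simp)
  refine ⟨contDiffOn_uncurry_of_eq_affine_transform hIopen (by simp) hX hX' hX'_ne hu hδ₁ hutdef,
    fun t x hx => ?_⟩
  exact DiffusionConvectionEqAt.transform hIopen hδ₁ hδ₅ hδ₇ (hA.differentiable (by simp))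
    (hu.of_le (WithTop.coe_le_coe.mpr le_top)) hH' hX_strict hutdef hftdef hhtdef hAtdef hBtdef
    hx (hpde t x hx)

/-- The extended equivalence (sub)group `Ĝ∼₁` preserving `g = 1`. With
`H' = h`, `X' = δ₅ e^{δ₈ H}` (so `X = δ₅ ∫ e^{δ₈ H} dx + δ₆`), the transformation
`t̃ = δ₁ t + δ₂`, `x̃ = X(x)`, `ũ = δ₃ u + δ₄`,
`f̃(X(x)) = δ₁ δ₅⁻¹ δ₉ f e^{-2δ₈ H}`, `h̃(X(x)) = δ₉ δ₇⁻¹ h e^{-δ₈ H}`,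
`Ã(δ₃v+δ₄) = δ₅ δ₉ A(v)`, `B̃(δ₃v+δ₄) = δ₇ (B(v) + δ₈ A(v))`
maps any smooth solution of `f u_t = (A(u) u_x)_x + h B(u) u_x` to a smooth solution
`ũ` (written `ut` below) of `f̃ ũ_t̃ = (Ã(ũ) ũ_x̃)_x̃ + h̃ B̃(ũ) ũ_x̃` on `ℝ × X(I)`. -/
theorem extended_equivalence_group_preserving_g_one
    (I : Set ℝ) (hIopen : IsOpen I) (hIconn : Convex ℝ I)
    (f h : ℝ → ℝ) (hf : ContDiffOn ℝ ∞ f I) (hh : ContDiffOn ℝ ∞ h I)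
    (hf0 : ∀ x ∈ I, f x ≠ 0)
    (A B : ℝ → ℝ) (hA : ContDiff ℝ ∞ A) (hB : ContDiff ℝ ∞ B)
    (δ₁ δ₂ δ₃ δ₄ δ₅ δ₆ δ₇ δ₈ δ₉ : ℝ)
    (hδ : δ₁ * δ₃ * δ₅ * δ₇ * δ₉ ≠ 0)
    (H : ℝ → ℝ) (hH : ContDiffOn ℝ ∞ H I) (hH' : ∀ x ∈ I, HasDerivAt H (h x) x)
    (X : ℝ → ℝ) (hX : ContDiffOn ℝ ∞ X I)
    (hX' : ∀ x ∈ I, HasDerivAt X (δ₅ * Real.exp (δ₈ * H x)) x)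
    (u : ℝ → ℝ → ℝ)
    (hu : ContDiffOn ℝ ∞ (fun p : ℝ × ℝ => u p.1 p.2) (univ ×ˢ I))
    (hpde : ∀ t : ℝ, ∀ x ∈ I,
      f x * deriv (fun s => u s x) t
        = deriv (fun y => A (u t y) * deriv (fun z => u t z) y) x
          + h x * B (u t x) * deriv (fun y => u t y) x)
    (ut : ℝ → ℝ → ℝ) (ft ht At Bt : ℝ → ℝ)
    (hutdef : ∀ t : ℝ, ∀ x ∈ I, ut (δ₁ * t + δ₂) (X x) = δ₃ * u t x + δ₄)
    (hftdef : ∀ x ∈ I, ft (X x) = δ₁ * δ₅⁻¹ * δ₉ * f x * Real.exp (-(2 * δ₈ * H x)))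
    (hhtdef : ∀ x ∈ I, ht (X x) = δ₉ * δ₇⁻¹ * h x * Real.exp (-(δ₈ * H x)))
    (hAtdef : ∀ v : ℝ, At (δ₃ * v + δ₄) = δ₅ * δ₉ * A v)
    (hBtdef : ∀ v : ℝ, Bt (δ₃ * v + δ₄) = δ₇ * (B v + δ₈ * A v)) :
    ContDiffOn ℝ ∞ (fun p : ℝ × ℝ => ut p.1 p.2) (univ ×ˢ (X '' I))
      ∧ ∀ t : ℝ, ∀ x ∈ I,
          ft (X x) * deriv (fun s => ut s (X x)) (δ₁ * t + δ₂)
            = deriv (fun y => At (ut (δ₁ * t + δ₂) y)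
                * deriv (fun z => ut (δ₁ * t + δ₂) z) y) (X x)
              + ht (X x) * Bt (ut (δ₁ * t + δ₂) (X x))
                * deriv (fun y => ut (δ₁ * t + δ₂) y) (X x) :=
  extended_equivalence_group_preserving_g_one_general I hIopen f h A B hA δ₁ δ₂ δ₃ δ₄ δ₅ δ₇ δ₈ δ₉ hδ
    H hH' X hX hX' u hu hpde ut ft ht At Bt hutdef hftdef hhtdef hAtdef hBtdef
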